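/- Assume W is essential and let w, w' ∈ W_reg. If wC ∩ w'C ≠ {0}, then C_w ∩ C_{w'} ≠ {0}. -/

import Mathlib

open scoped RealInnerProductSpace

noncomputable section

/-- `g` is the orthogonal reflection in the linear hyperplane orthogonal to some
nonzero vector `u`. -/
def IsLinRefl {V : Type*} [NormedAddCommGroup V] [InnerProductSpace ℝ V]
    (g : V ≃ₗᵢ[ℝ] V) : Prop :=
  ∃ u : V, u ≠ 0 ∧ ∀ x : V, g x = x - ((2 * ⟪x, u⟫) / ⟪u, u⟫) • u

/-- The union of the reflection hyperplanes (mirrors) of the reflections belonging to `W`;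
the mirror of a reflection is exactly its set of fixed points. -/
def mirrors {V : Type*} [NormedAddCommGroup V] [InnerProductSpace ℝ V]
    (W : Subgroup (V ≃ₗᵢ[ℝ] V)) : Set V :=
  ⋃ g ∈ {g : V ≃ₗᵢ[ℝ] V | g ∈ W ∧ IsLinRefl g}, {x : V | g x = x}

/-- `C` is a fundamental chamber for `W`: the closure of a connected component of the
complement of the union of the reflection hyperplanes of `W`. -/
def IsChamber {V : Type*} [NormedAddCommGroup V] [InnerProductSpace ℝ V]
    (W : Subgroup (V ≃ₗᵢ[ℝ] V)) (C : Set V) : Prop :=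
  ∃ x₀ ∈ (mirrors W)ᶜ, C = closure (connectedComponentIn (mirrors W)ᶜ x₀)


/-! The closed chamber `C` is a strict fundamental domain: if `x` and `g x` both lie in `C`, then
`g x = x`. For `p, q` in the open chamber, an element `g₀ ∈ W` maximising `⟪p, g₀ q⟫` sends `q`
into `C`, since a reflection in a wall separating `g₀ q` from `C` would increase the value; as the
translates of the open chamber are disjoint, `g₀ = 1`. Hence `⟪p, g q⟫ ≤ ⟪p, q⟫`, which extends
to `C` by continuity, and `p = g x`, `q = x` gives `‖g x - x‖² ≤ 0`.

Now if `0 ≠ w x = w' x'` with `x, x' ∈ C`, then `x' = w'⁻¹ w x` forces `x' = x`, so `x - w x =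
x - w' x` lies in `C_w ∩ C_{w'}`, and it is nonzero because `w` is regular. -/

open Filter Topology

section Reflections

variable {V : Type*} [NormedAddCommGroup V] [InnerProductSpace ℝ V]

namespace IsLinRefl

variable {s : V ≃ₗᵢ[ℝ] V}

theorem inner_sub_apply_mul_inner_sub_apply (hs : IsLinRefl s) (x y z : V) :
    ⟪x - s x, y - s y⟫ * ⟪y - s y, z - s z⟫ = ⟪y - s y, y - s y⟫ * ⟪x - s x, z - s z⟫ := by
  obtain ⟨u, -, hu⟩ := hs
  simp only [hu, sub_sub_cancel, real_inner_smul_left, real_inner_smul_right]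
  ring

theorem inner_sub_apply_eq_two_mul (hs : IsLinRefl s) (x y : V) :
    ⟪x - s x, y - s y⟫ = 2 * ⟪x, y - s y⟫ := by
  obtain ⟨u, hu0, hu⟩ := hs
  have huu : ⟪u, u⟫ ≠ 0 := inner_self_ne_zero.mpr hu0
  simp only [hu, sub_sub_cancel, real_inner_smul_left, real_inner_smul_right]
  field_simp

theorem apply_eq_self_of_inner_sub_apply_eq_zero (hs : IsLinRefl s) {a y : V} (ha : s a ≠ a)
    (h : ⟪y - s y, a - s a⟫ = 0) : s y = y := by
  have key := hs.inner_sub_apply_mul_inner_sub_apply y a y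
  rw [h, zero_mul, eq_comm, mul_eq_zero, inner_self_eq_zero, inner_self_eq_zero,
    sub_eq_zero, sub_eq_zero] at key
  exact key.resolve_left ha.symm |>.symm

theorem inner_sub_apply_nonneg (hs : IsLinRefl s) {p a y : V} (hpa : 0 < ⟪p - s p, a - s a⟫)
    (hpy : ⟪p, s y⟫ ≤ ⟪p, y⟫) : 0 ≤ ⟪y - s y, a - s a⟫ := by
  have key := hs.inner_sub_apply_mul_inner_sub_apply y p a
  have hyp : 0 ≤ ⟪y - s y, p - s p⟫ := by
    rw [real_inner_comm, hs.inner_sub_apply_eq_two_mul, inner_sub_right]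
    linarith
  have hp : 0 < ⟪p - s p, p - s p⟫ := real_inner_self_pos.mpr fun h => by simp [h] at hpa
  exact nonneg_of_mul_nonneg_right (key ▸ mul_nonneg hyp hpa.le) hp

end IsLinRefl

section Chamber

variable (W : Subgroup (V ≃ₗᵢ[ℝ] V)) (x₀ : V)

/- The side of the mirror of `s` containing `x₀` is read off the sign of `⟪z - s z, x₀ - s x₀⟫`,
which avoids choosing a normal vector for each reflection. -/
def openChamber : Set V :=
  {z | ∀ s ∈ W, IsLinRefl s → 0 < ⟪z - s z, x₀ - s x₀⟫}

def closedChamber : Set V :=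
  {z | ∀ s ∈ W, IsLinRefl s → 0 ≤ ⟪z - s z, x₀ - s x₀⟫}

variable {W x₀}

theorem mem_mirrors {x : V} : x ∈ mirrors W ↔ ∃ s ∈ W, IsLinRefl s ∧ s x = x := by
  simp [mirrors, and_assoc]

theorem apply_ne_self_of_notMem_mirrors (hx₀ : x₀ ∉ mirrors W) {s : V ≃ₗᵢ[ℝ] V} (hs : s ∈ W)
    (hrefl : IsLinRefl s) : s x₀ ≠ x₀ :=
  fun h => hx₀ (mem_mirrors.mpr ⟨s, hs, hrefl, h⟩)

theorem self_mem_openChamber (hx₀ : x₀ ∉ mirrors W) : x₀ ∈ openChamber W x₀ :=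
  fun _s hs hrefl => real_inner_self_pos.mpr <|
    sub_ne_zero.mpr (apply_ne_self_of_notMem_mirrors hx₀ hs hrefl).symm

theorem zero_mem_closedChamber : (0 : V) ∈ closedChamber W x₀ :=
  fun s _ _ => by simp

theorem openChamber_subset_closedChamber : openChamber W x₀ ⊆ closedChamber W x₀ :=
  fun _z hz s hs hrefl => (hz s hs hrefl).le

theorem openChamber_subset_compl_mirrors : openChamber W x₀ ⊆ (mirrors W)ᶜ := by
  intro z hz hzm
  obtain ⟨s, hs, hrefl, hsz⟩ := mem_mirrors.mp hzm
  simpa [hsz] using hz s hs hrefl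

theorem isLinearMap_inner_sub_apply (s : V ≃ₗᵢ[ℝ] V) (a : V) :
    IsLinearMap ℝ fun z => ⟪z - s z, a⟫ where
  map_add x y := by simp only [map_add, add_sub_add_comm, inner_add_left]
  map_smul c x := by simp only [map_smul, ← smul_sub, real_inner_smul_left, smul_eq_mul]

theorem convex_openChamber : Convex ℝ (openChamber W x₀) := by
  simp only [openChamber, Set.ofPred_forall]
  exact convex_iInter₂ fun s _ => convex_iInter fun _ =>
    convex_halfSpace_gt (isLinearMap_inner_sub_apply s _) 0

theorem isOpen_openChamber (hW : (W : Set (V ≃ₗᵢ[ℝ] V)).Finite) : IsOpen (openChamber W x₀) := by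
  have : openChamber W x₀ =
      ⋂ s ∈ {s | s ∈ W ∧ IsLinRefl s}, {z | 0 < ⟪z - s z, x₀ - s x₀⟫} := by
    ext z; simp [openChamber]
  rw [this]
  exact (hW.subset fun s hs => hs.1).isOpen_biInter fun s _ =>
    isOpen_lt continuous_const (by fun_prop)

theorem isClosed_closedChamber : IsClosed (closedChamber W x₀) := by
  simp only [closedChamber, Set.ofPred_forall]
  exact isClosed_biInter fun s _ => isClosed_iInter fun _ =>
    isClosed_le continuous_const (by fun_prop)

theorem connectedComponentIn_compl_mirrors (hx₀ : x₀ ∉ mirrors W) :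
    connectedComponentIn (mirrors W)ᶜ x₀ = openChamber W x₀ := by
  refine subset_antisymm (fun z hz s hs hrefl => ?_) <|
    convex_openChamber.isPreconnected.subset_connectedComponentIn (self_mem_openChamber hx₀)
      openChamber_subset_compl_mirrors
  by_contra! hz₀
  have hx₀' : 0 < ⟪x₀ - s x₀, x₀ - s x₀⟫ := self_mem_openChamber hx₀ s hs hrefl
  obtain ⟨y, hy, hy₀⟩ := isPreconnected_connectedComponentIn.intermediate_value
    hz (mem_connectedComponentIn hx₀)
    (f := fun y => ⟪y - s y, x₀ - s x₀⟫) (by fun_prop) ⟨hz₀, hx₀'.le⟩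
  exact connectedComponentIn_subset _ _ hy <| mem_mirrors.mpr ⟨s, hs, hrefl,
    hrefl.apply_eq_self_of_inner_sub_apply_eq_zero
      (apply_ne_self_of_notMem_mirrors hx₀ hs hrefl) hy₀⟩

theorem add_smul_mem_openChamber (hx₀ : x₀ ∉ mirrors W) {z : V} (hz : z ∈ closedChamber W x₀)
    {t : ℝ} (ht : 0 < t) : z + t • x₀ ∈ openChamber W x₀ := by
  intro s hs hrefl
  rw [(isLinearMap_inner_sub_apply s _).map_add, (isLinearMap_inner_sub_apply s _).map_smul]
  exact add_pos_of_nonneg_of_pos (hz s hs hrefl) (smul_pos ht (self_mem_openChamber hx₀ s hs hrefl))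

theorem closure_openChamber (hx₀ : x₀ ∉ mirrors W) :
    closure (openChamber W x₀) = closedChamber W x₀ := by
  refine subset_antisymm
    (closure_minimal openChamber_subset_closedChamber isClosed_closedChamber) fun z hz => ?_
  have hlim : Tendsto (fun t : ℝ => z + t • x₀) (𝓝[>] 0) (𝓝 z) := by
    have : Continuous fun t : ℝ => z + t • x₀ := by fun_prop
    simpa using (this.tendsto 0).mono_left nhdsWithin_le_nhds
  exact mem_closure_of_tendsto hlim <|
    eventually_nhdsWithin_of_forall fun t ht => add_smul_mem_openChamber hx₀ hz ht

theorem closure_connectedComponentIn_compl_mirrors (hx₀ : x₀ ∉ mirrors W) :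
    closure (connectedComponentIn (mirrors W)ᶜ x₀) = closedChamber W x₀ := by
  rw [connectedComponentIn_compl_mirrors hx₀, closure_openChamber hx₀]

end Chamber

section FundamentalDomain

variable {W : Subgroup (V ≃ₗᵢ[ℝ] V)} {x₀ : V}

theorem exists_max_inner_apply_mem_closedChamber (hW : (W : Set (V ≃ₗᵢ[ℝ] V)).Finite) {p : V}
    (hp : p ∈ openChamber W x₀) (y : V) :
    ∃ g₀ ∈ W, (∀ g ∈ W, ⟪p, g y⟫ ≤ ⟪p, g₀ y⟫) ∧ g₀ y ∈ closedChamber W x₀ := by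
  obtain ⟨g₀, hg₀, hmax⟩ := Set.exists_max_image _ (fun g => ⟪p, g y⟫) hW ⟨1, W.one_mem⟩
  exact ⟨g₀, hg₀, hmax, fun s hs hrefl =>
    hrefl.inner_sub_apply_nonneg (hp s hs hrefl) (hmax (s * g₀) (W.mul_mem hs hg₀))⟩

variable (hx₀ : x₀ ∉ mirrors W)
  (hdisj : ∀ g ∈ W, ∀ g' ∈ W, g ≠ g' →
    ∀ x ∈ openChamber W x₀, ∀ x' ∈ openChamber W x₀, g x ≠ g' x')
include hx₀ hdisj

theorem eq_one_of_apply_mem_closedChamber {q : V} (hq : q ∈ openChamber W x₀)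
    {g : V ≃ₗᵢ[ℝ] V} (hg : g ∈ W) (hgq : g q ∈ closedChamber W x₀) : g = 1 := by
  by_cases hgq' : g q ∈ openChamber W x₀
  · by_contra hg1
    exact hdisj g hg 1 W.one_mem hg1 q hq (g q) hgq' rfl
  · exfalso
    obtain ⟨s, hs, hrefl, hle⟩ : ∃ s ∈ W, IsLinRefl s ∧ ⟪g q - s (g q), x₀ - s x₀⟫ ≤ 0 := by
      simpa [openChamber] using hgq'
    have hsx₀ := apply_ne_self_of_notMem_mirrors hx₀ hs hrefl
    have hsgq : s (g q) = g q := hrefl.apply_eq_self_of_inner_sub_apply_eq_zero hsx₀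
      (le_antisymm hle (hgq s hs hrefl))
    have hsg : s * g ≠ g := fun h => hsx₀ (by rw [mul_eq_right.mp h]; rfl)
    exact hdisj (s * g) (W.mul_mem hs hg) g hg hsg q hq q hq hsgq

theorem inner_apply_le_of_mem_openChamber (hW : (W : Set (V ≃ₗᵢ[ℝ] V)).Finite) {p q : V}
    (hp : p ∈ openChamber W x₀) (hq : q ∈ openChamber W x₀) {g : V ≃ₗᵢ[ℝ] V} (hg : g ∈ W) :
    ⟪p, g q⟫ ≤ ⟪p, q⟫ := by
  obtain ⟨g₀, hg₀, hmax, hg₀q⟩ := exists_max_inner_apply_mem_closedChamber hW hp q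
  obtain rfl := eq_one_of_apply_mem_closedChamber hx₀ hdisj hq hg₀ hg₀q
  exact hmax g hg

theorem inner_apply_le_of_mem_closedChamber (hW : (W : Set (V ≃ₗᵢ[ℝ] V)).Finite) {x y : V}
    (hx : x ∈ closedChamber W x₀) (hy : y ∈ closedChamber W x₀) {g : V ≃ₗᵢ[ℝ] V} (hg : g ∈ W) :
    ⟪x, g y⟫ ≤ ⟪x, y⟫ := by
  have hclosed : IsClosed {xy : V × V | ⟪xy.1, g xy.2⟫ ≤ ⟪xy.1, xy.2⟫} :=
    isClosed_le (by fun_prop) (by fun_prop)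
  have hsub : closure (openChamber W x₀ ×ˢ openChamber W x₀) ⊆ _ :=
    hclosed.closure_subset_iff.mpr fun xy hxy =>
      inner_apply_le_of_mem_openChamber hx₀ hdisj hW hxy.1 hxy.2 hg
  rw [closure_prod_eq, closure_openChamber hx₀] at hsub
  exact hsub (Set.mk_mem_prod hx hy)

theorem apply_eq_self_of_mem_closedChamber (hW : (W : Set (V ≃ₗᵢ[ℝ] V)).Finite) {x : V}
    (hx : x ∈ closedChamber W x₀) {g : V ≃ₗᵢ[ℝ] V} (hg : g ∈ W)
    (hgx : g x ∈ closedChamber W x₀) : g x = x := by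
  have hle := inner_apply_le_of_mem_closedChamber hx₀ hdisj hW hgx hx hg
  have hsq : ⟪g x - x, g x - x⟫ ≤ 0 := by
    rw [g.inner_map_map] at hle
    rw [real_inner_sub_sub_self, g.inner_map_map, real_inner_comm x]
    linarith
  exact sub_eq_zero.mp (real_inner_self_nonpos.mp hsq)

end FundamentalDomain

end Reflections

theorem cones_intersect_of_chambers_intersect_general {V : Type*} [NormedAddCommGroup V]
    [InnerProductSpace ℝ V]
    (W : Subgroup (V ≃ₗᵢ[ℝ] V)) (C : Set V)
    (hWfin : (W : Set (V ≃ₗᵢ[ℝ] V)).Finite)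
    (hC : IsChamber W C)
    (hdisj : ∀ w ∈ W, ∀ w' ∈ W, w ≠ w' →
      ∀ x ∈ interior C, ∀ x' ∈ interior C, w x ≠ w' x')
    (w w' : V ≃ₗᵢ[ℝ] V) (hw : w ∈ W) (hw' : w' ∈ W)
    (hwreg : ∀ x : V, w x = x → x = 0)
    (hne : {v : V | ∃ x ∈ C, v = w x} ∩ {v : V | ∃ x ∈ C, v = w' x} ≠ {0}) :
    {v : V | ∃ x ∈ C, v = x - w x} ∩ {v : V | ∃ x ∈ C, v = x - w' x} ≠ {0} := by
  obtain ⟨x₀, hx₀, hCeq⟩ := hC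
  rw [closure_connectedComponentIn_compl_mirrors hx₀] at hCeq
  subst hCeq
  have hopen : openChamber W x₀ ⊆ interior (closedChamber W x₀) :=
    interior_maximal openChamber_subset_closedChamber (isOpen_openChamber hWfin)
  have hfix : ∀ x ∈ closedChamber W x₀, ∀ g ∈ W, g x ∈ closedChamber W x₀ → g x = x :=
    fun x hx g hg => apply_eq_self_of_mem_closedChamber hx₀
      (fun g hg g' hg' hgg' y hy y' hy' => hdisj g hg g' hg' hgg' y (hopen hy) y' (hopen hy'))
      hWfin hx hg
  have h0 : (0 : V) ∈ {v : V | ∃ x ∈ closedChamber W x₀, v = w x} ∩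
      {v : V | ∃ x ∈ closedChamber W x₀, v = w' x} :=
    ⟨⟨0, zero_mem_closedChamber, (map_zero w).symm⟩,
      ⟨0, zero_mem_closedChamber, (map_zero w').symm⟩⟩
  obtain ⟨_, ⟨⟨x, hx, rfl⟩, x', hx', hwx⟩, hwx0⟩ :=
    ((Set.nontrivial_iff_ne_singleton h0).mpr hne).exists_ne 0
  obtain rfl : x = x' := by
    have hmap : (w'⁻¹ * w) x = x' := by simp [hwx]
    rw [← hmap, hfix x hx _ (W.mul_mem (W.inv_mem hw') hw) (hmap ▸ hx')]
  have hx0 : x ≠ 0 := by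
    rintro rfl
    exact hwx0 (map_zero w)
  intro hcap
  have hmem : x - w x ∈ ({0} : Set V) := hcap ▸ ⟨⟨x, hx, rfl⟩, ⟨x, hx, by rw [hwx]⟩⟩
  exact hx0 (hwreg x (sub_eq_zero.mp hmem).symm)

/-- If `W` is essential, `w, w' ∈ W_reg` and `wC ∩ w'C ≠ {0}`, then
`(1-w)C ∩ (1-w')C ≠ {0}`. -/
theorem cones_intersect_of_chambers_intersect {V : Type*} [NormedAddCommGroup V]
    [InnerProductSpace ℝ V] [FiniteDimensional ℝ V]
    (W : Subgroup (V ≃ₗᵢ[ℝ] V)) (C : Set V)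
    (hWfin : (W : Set (V ≃ₗᵢ[ℝ] V)).Finite)
    (hWgen : Subgroup.closure {g : V ≃ₗᵢ[ℝ] V | g ∈ W ∧ IsLinRefl g} = W)
    (hC : IsChamber W C)
    (hcover : ∀ v : V, ∃ w ∈ W, ∃ x ∈ C, w x = v)
    (hdisj : ∀ w ∈ W, ∀ w' ∈ W, w ≠ w' →
      ∀ x ∈ interior C, ∀ x' ∈ interior C, w x ≠ w' x')
    (hess : ∀ v : V, (∀ w ∈ W, w v = v) → v = 0)
    (w w' : V ≃ₗᵢ[ℝ] V) (hw : w ∈ W) (hw' : w' ∈ W)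
    (hwreg : ∀ x : V, w x = x → x = 0) (hw'reg : ∀ x : V, w' x = x → x = 0)
    (hne : {v : V | ∃ x ∈ C, v = w x} ∩ {v : V | ∃ x ∈ C, v = w' x} ≠ {0}) :
    {v : V | ∃ x ∈ C, v = x - w x} ∩ {v : V | ∃ x ∈ C, v = x - w' x} ≠ {0} :=
  cones_intersect_of_chambers_intersect_general W C hWfin hC hdisj w w' hw hw' hwreg hne
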